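/- For a forest F with bi-order traversal sequence and a node u of F, the subforest F[l(u), r(u)) equals the subtree rooted at u, where l(u) is the index of u's first occurrence and r(u) is one plus the index of its second occurrence. Moreover, F[l,r) contains a node u if and only if l ≤ l(u) and r(u) ≤ r. -/

import Mathlib

/-- Ordered rooted trees with node labels from `α`. -/
inductive Tree' (α : Type) : Type
  | node (label : α) (children : List (Tree' α))

/-- An ordered forest is an ordered list of trees. -/
abbrev Forest (α : Type) := List (Tree' α)

mutual
/-- Number of nodes of a tree. -/
def Tree'.size {α : Type} : Tree' α → ℕ
  | .node _ cs => 1 + Forest.size cs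
/-- Number of nodes of a forest. -/
def Forest.size {α : Type} : Forest α → ℕ
  | [] => 0
  | t :: ts => Tree'.size t + Forest.size ts
end

/-- A single edit operation on a forest: delete a node (promoting its children, in
order, to its parent) or relabel a node. -/
inductive EditStep {α : Type} : Forest α → Forest α → Prop
  | delete (pre : Forest α) (a : α) (cs post : Forest α) :
      EditStep (pre ++ Tree'.node a cs :: post) (pre ++ cs ++ post)
  | relabel (pre : Forest α) (a b : α) (cs post : Forest α) :
      EditStep (pre ++ Tree'.node a cs :: post) (pre ++ Tree'.node b cs :: post)
  | inside (pre : Forest α) (a : α) {cs cs' : Forest α} (post : Forest α) :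
      EditStep cs cs' →
      EditStep (pre ++ Tree'.node a cs :: post) (pre ++ Tree'.node a cs' :: post)

/-- `EditSteps n F G`: `G` is obtained from `F` by exactly `n` edit operations. -/
inductive EditSteps {α : Type} : ℕ → Forest α → Forest α → Prop
  | refl (F : Forest α) : EditSteps 0 F F
  | tail {n : ℕ} {F G H : Forest α} : EditSteps n F G → EditStep G H → EditSteps (n + 1) F H

/-- The (unweighted) tree edit distance: the minimum total number of relabelings
and deletions applied to `F1` and `F2` so that they become identical. -/
noncomputable def ed {α : Type} (F1 F2 : Forest α) : ℕ :=
  sInf {k | ∃ (k1 k2 : ℕ) (G : Forest α), k = k1 + k2 ∧ EditSteps k1 F1 G ∧ EditSteps k2 F2 G}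

/-- The similarity between two forests. -/
noncomputable def sim {α : Type} (F1 F2 : Forest α) : ℤ :=
  (Forest.size F1 : ℤ) + Forest.size F2 - ed F1 F2

mutual
/-- Helper for the subforest operation: the part of tree `t`, whose bi-order
traversal interval starts at position `p`, surviving the restriction to positions `[l, r)`.
A node is kept iff both of its occurrences lie at positions `l, …, r - 1`;
removed nodes have their children promoted. -/
def cutT {α : Type} (l r p : ℕ) : Tree' α → Forest α
  | .node a cs =>
      if l ≤ p ∧ p + 2 * Tree'.size (Tree'.node a cs) ≤ r then [Tree'.node a cs]
      else cutF l r (p + 1) cs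
/-- The part of forest `F`, whose bi-order traversal starts at position `p`,
surviving the restriction to positions `[l, r)`. -/
def cutF {α : Type} (l r p : ℕ) : Forest α → Forest α
  | [] => []
  | t :: ts => cutT l r p t ++ cutF l r (p + 2 * Tree'.size t) ts
end

/-- The subforest `F[l, r)` determined by the interval `[l, r)` of the (1-indexed)
bi-order traversal sequence of `F`. -/
def subforest {α : Type} (F : Forest α) (l r : ℕ) : Forest α := cutF l r 1 F

/-- `OccF F base p t`: the forest `F`, whose bi-order traversal starts at position `base`,
has a node with subtree `t` whose first occurrence is at position `p`. -/
inductive OccF {α : Type} : Forest α → ℕ → ℕ → Tree' α → Prop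
  | head (a : α) (cs ts : Forest α) (base : ℕ) :
      OccF (Tree'.node a cs :: ts) base base (Tree'.node a cs)
  | inChildren {cs : Forest α} {p : ℕ} {t : Tree' α} (a : α) (ts : Forest α) (base : ℕ) :
      OccF cs (base + 1) p t → OccF (Tree'.node a cs :: ts) base p t
  | inRest {ts : Forest α} {p : ℕ} {t : Tree' α} (t0 : Tree' α) (base : ℕ) :
      OccF ts (base + 2 * Tree'.size t0) p t → OccF (t0 :: ts) base p t

/-- The label of the root of a tree. -/
def Tree'.label {α : Type} : Tree' α → α
  | .node a _ => a

/-- A node occurrence `(p, t)` (first occurrence at position `p`, subtree `t`) is a strict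
ancestor of the occurrence `(q, s)`. -/
def Anc {α : Type} (u v : ℕ × Tree' α) : Prop :=
  u.1 < v.1 ∧ v.1 + 2 * Tree'.size v.2 ≤ u.1 + 2 * Tree'.size u.2

/-- The node occurrence `u` precedes the node occurrence `v`: `r(u) ≤ l(v)`. -/
def Prec {α : Type} (u v : ℕ × Tree' α) : Prop :=
  u.1 + 2 * Tree'.size u.2 ≤ v.1

/-!
The traversal interval `[p, p + 2|t|)` of a node with subtree `t` contains the intervals of
its descendants and is disjoint from those of all other nodes. So cutting to the interval of
`u` discards every tree beside `u`, dissolves the ancestors of `u`, and keeps `u` whole. For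
the count, list the nodes in traversal order: a subtree kept by the cut lies entirely in
`[l, r)` together with all its nodes, and a dissolved node does not, so the size of the cut is
the number of listed nodes whose interval lies in `[l, r)`.
-/

section

variable {α : Type}

theorem Tree'.one_le_size (t : Tree' α) : 1 ≤ t.size := by
  cases t with
  | node a cs => rw [Tree'.size]; omega

mutual
theorem cutT_eq_nil_of_disjoint (l r p : ℕ) (t : Tree' α)
    (h : r ≤ p ∨ p + 2 * t.size ≤ l) : cutT l r p t = [] := by
  cases t with
  | node a cs =>
    have := Tree'.one_le_size (.node a cs)
    rw [Tree'.size] at h this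
    rw [cutT, if_neg (by rw [Tree'.size]; omega), cutF_eq_nil_of_disjoint]
    omega
theorem cutF_eq_nil_of_disjoint (l r p : ℕ) (F : Forest α)
    (h : r ≤ p ∨ p + 2 * Forest.size F ≤ l) : cutF l r p F = [] := by
  cases F with
  | nil => rw [cutF]
  | cons t ts =>
    rw [Forest.size] at h
    rw [cutF, cutT_eq_nil_of_disjoint, cutF_eq_nil_of_disjoint, List.nil_append] <;> omega
end

theorem OccF.bounds {F : Forest α} {base p : ℕ} {t : Tree' α} (h : OccF F base p t) :
    base ≤ p ∧ p + 2 * t.size ≤ base + 2 * Forest.size F := by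
  induction h with
  | head a cs ts base => simp only [Forest.size]; omega
  | inChildren a ts base _ ih => simp only [Forest.size, Tree'.size] at ih ⊢; omega
  | inRest t0 base _ ih => simp only [Forest.size] at ih ⊢; omega

theorem cutF_of_occF {F : Forest α} {base p : ℕ} {t : Tree' α} (h : OccF F base p t) :
    cutF p (p + 2 * t.size) base F = [t] := by
  induction h with
  | head a cs ts base =>
    rw [cutF, cutT, if_pos ⟨le_rfl, le_rfl⟩,
      cutF_eq_nil_of_disjoint _ _ _ _ (Or.inl le_rfl), List.append_nil]
  | inChildren a ts base h ih =>
    have hb := h.bounds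
    rw [cutF, cutT, if_neg (by omega), ih,
      cutF_eq_nil_of_disjoint _ _ _ _ (by rw [Tree'.size]; omega), List.append_nil]
  | inRest t0 base h ih =>
    have hb := h.bounds
    rw [cutF, cutT_eq_nil_of_disjoint _ _ _ _ (Or.inr (by omega)), ih, List.nil_append]

mutual
/-- The nodes of `t`, as pairs (first occurrence, subtree), in traversal order. -/
def Tree'.occs (base : ℕ) : Tree' α → List (ℕ × Tree' α)
  | .node a cs => (base, .node a cs) :: Forest.occs (base + 1) cs
def Forest.occs (base : ℕ) : Forest α → List (ℕ × Tree' α)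
  | [] => []
  | t :: ts => Tree'.occs base t ++ Forest.occs (base + 2 * t.size) ts
end

mutual
theorem Tree'.occF_of_mem_occs {base : ℕ} {t : Tree' α} {u : ℕ × Tree' α}
    (h : u ∈ t.occs base) (ts : Forest α) : OccF (t :: ts) base u.1 u.2 := by
  cases t with
  | node a cs =>
    rcases List.mem_cons.mp h with rfl | h
    · exact .head a cs ts base
    · exact .inChildren a ts base (Forest.occF_of_mem_occs h)
theorem Forest.occF_of_mem_occs {base : ℕ} {F : Forest α} {u : ℕ × Tree' α}
    (h : u ∈ F.occs base) : OccF F base u.1 u.2 := by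
  cases F with
  | nil => simp [Forest.occs] at h
  | cons t ts =>
    rcases List.mem_append.mp h with h | h
    · exact Tree'.occF_of_mem_occs h ts
    · exact .inRest t base (Forest.occF_of_mem_occs h)
end

theorem OccF.mem_occs {F : Forest α} {base p : ℕ} {t : Tree' α} (h : OccF F base p t) :
    (p, t) ∈ F.occs base := by
  induction h with
  | head => simp [Forest.occs, Tree'.occs]
  | inChildren a ts base _ ih => simp [Forest.occs, Tree'.occs, ih]
  | inRest t0 base _ ih => simp [Forest.occs, ih]

theorem Forest.mem_occs_iff {F : Forest α} {base : ℕ} {u : ℕ × Tree' α} :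
    u ∈ F.occs base ↔ OccF F base u.1 u.2 :=
  ⟨Forest.occF_of_mem_occs, OccF.mem_occs⟩

theorem Forest.bounds_of_mem_occs {F : Forest α} {base : ℕ} {u : ℕ × Tree' α}
    (h : u ∈ F.occs base) : base ≤ u.1 ∧ u.1 + 2 * u.2.size ≤ base + 2 * F.size :=
  (Forest.mem_occs_iff.mp h).bounds

mutual
theorem Tree'.length_occs (base : ℕ) (t : Tree' α) : (t.occs base).length = t.size := by
  cases t with
  | node a cs =>
    rw [Tree'.occs, Tree'.size, List.length_cons, Forest.length_occs]
    omega
theorem Forest.length_occs (base : ℕ) (F : Forest α) : (F.occs base).length = F.size := by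
  cases F with
  | nil => rfl
  | cons t ts =>
    rw [Forest.occs, Forest.size, List.length_append, Tree'.length_occs, Forest.length_occs]
end

mutual
theorem Tree'.nodup_occs (base : ℕ) (t : Tree' α) : (t.occs base).Nodup := by
  cases t with
  | node a cs =>
    refine List.nodup_cons.mpr ⟨fun h => ?_, Forest.nodup_occs (base + 1) cs⟩
    have := Forest.bounds_of_mem_occs h
    simp at this
theorem Forest.nodup_occs (base : ℕ) (F : Forest α) : (F.occs base).Nodup := by
  cases F with
  | nil => exact List.nodup_nil
  | cons t ts =>
    refine (Tree'.nodup_occs base t).append (Forest.nodup_occs _ ts) fun u hl hr => ?_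
    have hl := Forest.bounds_of_mem_occs (F := [t]) (by simpa [Forest.occs] using hl)
    have hr := Forest.bounds_of_mem_occs hr
    have := u.2.one_le_size
    simp only [Forest.size] at hl
    omega
end

theorem Forest.size_append (F G : Forest α) : (F ++ G).size = F.size + G.size := by
  induction F with
  | nil => simp [Forest.size]
  | cons t ts ih => simp only [List.cons_append, Forest.size, ih]; omega

mutual
theorem size_cutT_eq_length_filter (l r p : ℕ) (t : Tree' α) :
    Forest.size (cutT l r p t) =
      ((t.occs p).filter fun u => l ≤ u.1 ∧ u.1 + 2 * u.2.size ≤ r).length := by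
  cases t with
  | node a cs =>
    rw [cutT, Tree'.occs]
    by_cases h : l ≤ p ∧ p + 2 * (Tree'.node a cs).size ≤ r
    · have hcs : ∀ u ∈ Forest.occs (p + 1) cs, l ≤ u.1 ∧ u.1 + 2 * u.2.size ≤ r := fun u hu => by
        have := Forest.bounds_of_mem_occs hu
        rw [Tree'.size] at h
        omega
      rw [if_pos h, List.filter_cons_of_pos (by simpa using h),
        List.filter_eq_self.mpr (by simpa using hcs), List.length_cons, Forest.length_occs]
      simp only [Forest.size, Tree'.size]
      omega
    · rw [if_neg h, List.filter_cons_of_neg (by simpa using h), size_cutF_eq_length_filter]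
theorem size_cutF_eq_length_filter (l r p : ℕ) (F : Forest α) :
    Forest.size (cutF l r p F) =
      ((F.occs p).filter fun u => l ≤ u.1 ∧ u.1 + 2 * u.2.size ≤ r).length := by
  cases F with
  | nil => rfl
  | cons t ts =>
    rw [cutF, Forest.occs, Forest.size_append, List.filter_append, List.length_append,
      size_cutT_eq_length_filter, size_cutF_eq_length_filter]
end

theorem size_cutF_eq_card (l r p : ℕ) (F : Forest α) :
    Forest.size (cutF l r p F) =
      Nat.card {u : ℕ × Tree' α // OccF F p u.1 u.2 ∧ l ≤ u.1 ∧ u.1 + 2 * u.2.size ≤ r} := by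
  classical
  rw [size_cutF_eq_length_filter, ← List.toFinset_card_of_nodup ((F.nodup_occs p).filter _),
    ← Nat.card_eq_finsetCard]
  refine Nat.card_congr (Equiv.subtypeEquivRight fun u => ?_)
  simp [Forest.mem_occs_iff]

end

/-- For a node occurrence `(p, t)` of `F` (first occurrence at position `p` of the
bi-order traversal, so `l(u) = p` and `r(u) = p + 2|sub(u)|`), the subforest
`F[l(u), r(u))` equals the subtree rooted at `u`; moreover `F[l, r)` contains exactly
those nodes `u` of `F` with `l ≤ l(u)` and `r(u) ≤ r`. -/
theorem subforest_of_node_interval {α : Type} (F : Forest α) :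
    (∀ (p : ℕ) (t : Tree' α), OccF F 1 p t →
      subforest F p (p + 2 * Tree'.size t) = [t]) ∧
    (∀ l r : ℕ, Forest.size (subforest F l r) =
      Nat.card {pt : ℕ × Tree' α //
        OccF F 1 pt.1 pt.2 ∧ l ≤ pt.1 ∧ pt.1 + 2 * Tree'.size pt.2 ≤ r}) :=
  ⟨fun _ _ h => cutF_of_occF h, fun l r => size_cutF_eq_card l r 1 F⟩
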